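/- arXiv:1406.0349 — 7 statements merged into one kernel-verified Lean document; each statement's English description precedes it below -/
import Mathlib

section
/- Let G = (Σ, V, S, P) be a context-free grammar without empty productions, and let e_G be the DA expression over Γ_G = Σ ∪ V ∪ {α, ω, X} defined by e_G = φ₀ − (φ₁ ∪ φ₂ ∪ φ₃ ∪ φ₄ ∪ φ₅ ∪ φ₆ ∪ φ₇), where (writing Σ also for the expression ⋃_{b∈Σ} b): φ₀ = αΣω, φ₁ = αΣ(ω − α), φ₂ = α(Σα − α), φ₃ = ⋃_{Z₀→Z₁⋯Zₙ ∈ P} α(Z₁⋯Zₙ − Z₀)α, φ₄ = (α − αΣ)Sω, φ₅ = α(Σ − X)α, φ₆ = α(XX − X)α, φ₇ = α(XΣ ∩ Σ)α. Then L(G) ⊉ Σ⁺ (i.e., some nonempty word over Σ is not generated by G) if and only if e_G is finitely satisfiable. -/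
/-- Syntax of the Downward Algebra (DA): expressions built from relation names
in a vocabulary `Γ` using union, intersection, difference, and composition. -/
inductive DA (Γ : Type) : Type where
  | var : Γ → DA Γ
  | union : DA Γ → DA Γ → DA Γ
  | inter : DA Γ → DA Γ → DA Γ
  | diff : DA Γ → DA Γ → DA Γ
  | comp : DA Γ → DA Γ → DA Γ

namespace DA

/-- Semantics: the binary relation `e(I)` defined by expression `e` in a structure `I`
(a structure over `Γ` with domain `D` assigns a binary relation on `D` to each name). -/
def eval {Γ D : Type} (I : Γ → D → D → Prop) : DA Γ → D → D → Prop
  | .var a => I a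
  | .union e f => fun x y => eval I e x y ∨ eval I f x y
  | .inter e f => fun x y => eval I e x y ∧ eval I f x y
  | .diff e f => fun x y => eval I e x y ∧ ¬ eval I f x y
  | .comp e f => fun x y => ∃ z, eval I e x z ∧ eval I f z y

/-- The difference degree of an expression. -/
def deg {Γ : Type} : DA Γ → ℕ
  | .var _ => 0
  | .union e f => max (deg e) (deg f)
  | .inter e f => max (deg e) (deg f)
  | .diff e f => max (deg e) (deg f) + 1
  | .comp e f => max (deg e) (deg f)

/-- A structure is finite when each relation is a finite binary relation. -/
def FiniteStruct {Γ D : Type} (I : Γ → D → D → Prop) : Prop :=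
  ∀ a, {p : D × D | I a p.1 p.2}.Finite

/-- An expression is finitely satisfiable if some finite structure makes it
evaluate to a nonempty relation. -/
def FinSat {Γ : Type} (e : DA Γ) : Prop :=
  ∃ (D : Type) (I : Γ → D → D → Prop), FiniteStruct I ∧ ∃ x y, eval I e x y

end DA

/-- The vocabulary Γ_G = Σ ∪ V ∪ {α, ω, X}: a relation name for every terminal,
a relation name for every nonterminal, and three fresh names α, ω, X. -/
inductive Voc (T N : Type) : Type where
  | term : T → Voc T N
  | nt : N → Voc T N
  | alpha : Voc T N
  | omega : Voc T N
  | X : Voc T N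

namespace DA

/-- Union of a nonempty list of expressions (head and tail). -/
def unionAll {Γ : Type} (e : DA Γ) (l : List (DA Γ)) : DA Γ := l.foldl .union e

/-- Composition of a nonempty list of expressions (head and tail). -/
def compAll {Γ : Type} (e : DA Γ) (l : List (DA Γ)) : DA Γ := l.foldl .comp e

end DA

/-- The expression Σ = ⋃_{b ∈ Σ} b, the union of all terminal relation names
(T is a nonempty finite type, so the match never takes the junk branch). -/
noncomputable def sigmaE (T N : Type) [Fintype T] : DA (Voc T N) :=
  match (Finset.univ (α := T)).toList with
  | [] => .var .alpha
  | b :: l => DA.unionAll (.var (.term b)) (l.map fun b' => .var (.term b'))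

/-- The relation name associated to a grammar symbol. -/
def symVoc {T N : Type} : Symbol T N → Voc T N
  | .terminal b => .term b
  | .nonterminal Z => .nt Z

/-- The member α(Z₁⋯Zₙ − Z₀)α of φ₃ contributed by a production Z₀ → Z₁⋯Zₙ
(the grammar has no empty production, so the junk branch for an empty
right-hand side is never taken). -/
def ruleExpr {T N : Type} (r : ContextFreeRule T N) : DA (Voc T N) :=
  .comp (.var .alpha)
    (.comp
      (.diff
        (match r.output with
         | [] => .var .X
         | s :: l => DA.compAll (.var (symVoc s)) (l.map fun s' => .var (symVoc s')))
        (.var (.nt r.input)))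
      (.var .alpha))

/-- The expression e_G = φ₀ − (φ₁ ∪ φ₂ ∪ φ₃ ∪ φ₄ ∪ φ₅ ∪ φ₆ ∪ φ₇) over Γ_G, where
φ₀ = αΣω, φ₁ = αΣ(ω − α), φ₂ = α(Σα − α), φ₃ = ⋃_{Z₀→Z₁⋯Zₙ ∈ P} α(Z₁⋯Zₙ − Z₀)α,
φ₄ = (α − αΣ)Sω, φ₅ = α(Σ − X)α, φ₆ = α(XX − X)α, φ₇ = α(XΣ ∩ Σ)α. -/
noncomputable def eG (T : Type) [Fintype T] (G : ContextFreeGrammar T) : DA (Voc T G.NT) :=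
  let av : DA (Voc T G.NT) := .var .alpha
  let ov : DA (Voc T G.NT) := .var .omega
  let Xv : DA (Voc T G.NT) := .var .X
  let Sv : DA (Voc T G.NT) := .var (.nt G.initial)
  let Se : DA (Voc T G.NT) := sigmaE T G.NT
  let f0 := DA.comp av (DA.comp Se ov)
  let f1 := DA.comp av (DA.comp Se (.diff ov av))
  let f2 := DA.comp av (.diff (DA.comp Se av) av)
  let f4 := DA.comp (.diff av (DA.comp av Se)) (DA.comp Sv ov)
  let f5 := DA.comp av (DA.comp (.diff Se Xv) av)
  let f6 := DA.comp av (DA.comp (.diff (DA.comp Xv Xv) Xv) av)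
  let f7 := DA.comp av (DA.comp (.inter (DA.comp Xv Se) Se) av)
  .diff f0
    (DA.unionAll (.union f1 (.union f2 (.union f4 (.union f5 (.union f6 f7)))))
      (G.rules.toList.map ruleExpr))

/-!
A word `w ∉ L(G)` yields a model of `e_G` on the positions of `w`: `Σ` reads `w` letter by
letter, a nonterminal `Z` relates `i` to `j` when `Z ⇒* w[i:j]`, `X` is `<`, and one extra point
serves as both ends of `α`. Conversely, in a finite model the negated `φᵢ` make every
nonterminal contain the compositions of its right-hand sides inside the `α`-window, so
derivations lift to edges, and make `X` a strict order along which `Σ`-edges of the window go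
down. Walking back along `Σ`-edges from the `ω`-end must therefore stop, and `¬ φ₄` says that
the word read from the stopping point is not in `L(G)`.
-/

def RelChain {σ D : Type*} (R : σ → D → D → Prop) : List σ → D → D → Prop
  | [] => Eq
  | s :: l => Relation.Comp (R s) (RelChain R l)

namespace RelChain

variable {σ τ D : Type*} {R : σ → D → D → Prop}

@[simp]
theorem nil_iff {p q : D} : RelChain R [] p q ↔ p = q := Iff.rfl

@[simp]
theorem cons_iff {s : σ} {l : List σ} {p q : D} :
    RelChain R (s :: l) p q ↔ ∃ m, R s p m ∧ RelChain R l m q := Iff.rfl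

theorem singleton_iff {s : σ} {p q : D} : RelChain R [s] p q ↔ R s p q := by
  simp

theorem append_iff {u v : List σ} {p q : D} :
    RelChain R (u ++ v) p q ↔ ∃ m, RelChain R u p m ∧ RelChain R v m q := by
  induction u generalizing p with
  | nil => simp
  | cons s u ih => simp only [List.cons_append, cons_iff, ih]; aesop

theorem map_iff (f : τ → σ) {l : List τ} {p q : D} :
    RelChain R (l.map f) p q ↔ RelChain (fun t => R (f t)) l p q := by
  induction l generalizing p with
  | nil => rfl
  | cons t l ih => simp only [List.map_cons, cons_iff, ih]

theorem mono {R' : σ → D → D → Prop} (h : ∀ s p q, R s p q → R' s p q) {l : List σ}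
    {p q : D} (hl : RelChain R l p q) : RelChain R' l p q := by
  induction l generalizing p with
  | nil => exact hl
  | cons s l ih => obtain ⟨m, hm, hl⟩ := hl; exact ⟨m, h _ _ _ hm, ih hl⟩

theorem left_of_ne_nil {P : D → Prop} {l : List σ} {p q : D} (hc : RelChain R l p q)
    (hl : l ≠ []) (hR : ∀ s p q, R s p q → P p) : P p := by
  obtain ⟨s, l, rfl⟩ := List.exists_cons_of_ne_nil hl
  obtain ⟨m, hm, -⟩ := hc
  exact hR _ _ _ hm

theorem right_of_ne_nil {P : D → Prop} {l : List σ} {p q : D} (hc : RelChain R l p q)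
    (hl : l ≠ []) (hR : ∀ s p q, R s p q → P q) : P q := by
  rw [← List.dropLast_append_getLast hl, append_iff] at hc
  obtain ⟨m, -, hm⟩ := hc
  exact hR _ m q (singleton_iff.mp hm)

theorem of_derives {T : Type*} {G : ContextFreeGrammar T} {R : Symbol T G.NT → D → D → Prop}
    (hR : ∀ r ∈ G.rules, ∀ p q, RelChain R r.output p q → R (.nonterminal r.input) p q)
    {γ τ : List (Symbol T G.NT)} (h : G.Derives γ τ) {p q : D} (hτ : RelChain R τ p q) :
    RelChain R γ p q := by
  induction h using Relation.ReflTransGen.head_induction_on generalizing p q with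
  | refl => exact hτ
  | head hprod _ ih =>
    obtain ⟨r, hr, hrw⟩ := hprod
    obtain ⟨u, v, rfl, rfl⟩ := hrw.exists_parts
    have hτ' := ih hτ
    simp only [append_iff] at hτ' ⊢
    obtain ⟨m', ⟨m, hu, hout⟩, hv⟩ := hτ'
    exact ⟨m', ⟨m, hu, singleton_iff.mpr (hR r hr m m' hout)⟩, hv⟩

end RelChain

namespace DA

variable {Γ D : Type} {I : Γ → D → D → Prop}

theorem eval_unionAll (e : DA Γ) (l : List (DA Γ)) {x y : D} :
    eval I (unionAll e l) x y ↔ eval I e x y ∨ ∃ f ∈ l, eval I f x y := by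
  induction l generalizing e with
  | nil => simp [unionAll]
  | cons f l ih =>
    change eval I (unionAll (.union e f) l) x y ↔ _
    simp only [ih, eval, List.mem_cons, exists_eq_or_imp, or_assoc]

theorem eval_compAll (e : DA Γ) (l : List (DA Γ)) {x y : D} :
    eval I (compAll e l) x y ↔ ∃ m, eval I e x m ∧ RelChain (eval I) l m y := by
  induction l generalizing e with
  | nil => simp [compAll]
  | cons f l ih =>
    change eval I (compAll (.comp e f) l) x y ↔ _
    simp only [ih, eval, RelChain.cons_iff]
    aesop

theorem eval_compAll_var_map {σ : Type} (f : σ → Γ) (s : σ) (l : List σ) {x y : D} :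
    eval I (compAll (.var (f s)) (l.map fun t => .var (f t))) x y ↔
      RelChain (fun t => I (f t)) (s :: l) x y := by
  simp only [eval_compAll, RelChain.map_iff, RelChain.cons_iff]
  rfl

end DA

section Semantics

variable {T N D : Type} (I : Voc T N → D → D → Prop)

def sigmaRel (u v : D) : Prop := ∃ b, I (.term b) u v

theorem eval_sigmaE [Fintype T] [Nonempty T] {x y : D} :
    DA.eval I (sigmaE T N) x y ↔ sigmaRel I x y := by
  unfold sigmaE
  split
  next h =>
    have := Finset.mem_toList.mpr (Finset.mem_univ (Classical.arbitrary T))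
    simp [h] at this
  next b l h =>
    have hmem : ∀ b', b' ∈ b :: l := fun b' => h ▸ Finset.mem_toList.mpr (Finset.mem_univ b')
    simp only [DA.eval_unionAll, List.mem_map, sigmaRel]
    constructor
    · rintro (hb | ⟨_, ⟨b', -, rfl⟩, hb'⟩)
      exacts [⟨b, hb⟩, ⟨b', hb'⟩]
    · rintro ⟨b', hb'⟩
      rcases List.mem_cons.mp (hmem b') with rfl | hl
      exacts [Or.inl hb', Or.inr ⟨_, ⟨b', hl, rfl⟩, hb'⟩]

theorem eval_ruleExpr {r : ContextFreeRule T N} (hr : r.output ≠ []) {x y : D} :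
    DA.eval I (ruleExpr r) x y ↔ ∃ u v, I .alpha x u ∧
      (RelChain (fun s => I (symVoc s)) r.output u v ∧ ¬ I (.nt r.input) u v) ∧
        I .alpha v y := by
  obtain ⟨s, l, hsl⟩ := List.exists_cons_of_ne_nil hr
  simp only [ruleExpr, hsl, DA.eval, DA.eval_compAll_var_map]
  aesop

end Semantics

section Witness

variable {T : Type} (G : ContextFreeGrammar T) {D : Type} (I : Voc T G.NT → D → D → Prop)
  (x y : D)

/-- `e_G` holds at `(x, y)`, with each `¬ φᵢ` (for `i ≥ 1`) read as a closure property. -/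
structure EGWitness : Prop where
  exists_sigma_omega : ∃ u v, I .alpha x u ∧ sigmaRel I u v ∧ I .omega v y
  alpha_of_omega : ∀ u v, I .alpha x u → sigmaRel I u v → I .omega v y → I .alpha v y
  alpha_of_sigma : ∀ u v, I .alpha x u → sigmaRel I u v → I .alpha v y → I .alpha u y
  nt_of_rule : ∀ r ∈ G.rules, ∀ u v, I .alpha x u →
    RelChain (fun s => I (symVoc s)) r.output u v → I .alpha v y → I (.nt r.input) u v
  not_initial_omega : ∀ u v, I .alpha x u → (∀ z, I .alpha x z → ¬ sigmaRel I z u) →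
    I (.nt G.initial) u v → ¬ I .omega v y
  X_of_sigma : ∀ u v, I .alpha x u → sigmaRel I u v → I .alpha v y → I .X u v
  X_trans : ∀ u z v, I .alpha x u → I .X u z → I .X z v → I .alpha v y → I .X u v
  not_X_sigma : ∀ u z v, I .alpha x u → I .X u z → sigmaRel I z v → sigmaRel I u v →
    ¬ I .alpha v y

theorem eval_eG_iff [Fintype T] [Nonempty T] (hG : ∀ r ∈ G.rules, r.output ≠ []) :
    DA.eval I (eG T G) x y ↔ EGWitness G I x y := by
  have hrules : (∃ f ∈ G.rules.toList.map ruleExpr, DA.eval I f x y) ↔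
      ∃ r ∈ G.rules, DA.eval I (ruleExpr r) x y := by
    simp
  have hrule : (∃ r ∈ G.rules, DA.eval I (ruleExpr r) x y) ↔
      ∃ r ∈ G.rules, ∃ u v, I .alpha x u ∧
        (RelChain (fun s => I (symVoc s)) r.output u v ∧ ¬ I (.nt r.input) u v) ∧
          I .alpha v y :=
    exists_congr fun r => and_congr_right fun hr => eval_ruleExpr I (hG r hr)
  simp only [eG, DA.eval, DA.eval_unionAll, hrules, hrule, eval_sigmaE]
  push Not
  constructor
  · rintro ⟨⟨u, hu, v, hs, ho⟩, ⟨h₁, h₂, h₄, h₅, h₆, h₇⟩, h₃⟩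
    exact ⟨⟨u, v, hu, hs, ho⟩, fun u v hu hs ho => h₁ u hu v hs ho,
      fun u v hu hs hv => h₂ u hu ⟨v, hs, hv⟩,
      fun r hr u v hu hc hv => by_contra fun hn => h₃ r hr u v hu ⟨hc, hn⟩ hv,
      fun u v hu hp hS => h₄ u ⟨hu, hp⟩ v hS,
      fun u v hu hs hv => by_contra fun hn => h₅ u hu v ⟨hs, hn⟩ hv,
      fun u z v hu hz hv hy => by_contra fun hn => h₆ u hu v ⟨⟨z, hz, hv⟩, hn⟩ hy,
      fun u z v hu hz hs hs' => h₇ u hu v ⟨⟨z, hz, hs⟩, hs'⟩⟩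
  · rintro ⟨⟨u, v, hu, hs, ho⟩, h₁, h₂, h₃, h₄, h₅, h₆, h₇⟩
    exact ⟨⟨u, hu, v, hs, ho⟩, ⟨fun u hu v hs ho => h₁ u v hu hs ho,
      fun u hu ⟨v, hs, hv⟩ => h₂ u v hu hs hv,
      fun u ⟨hu, hp⟩ v hS => h₄ u v hu hp hS,
      fun u hu v ⟨hs, hn⟩ hv => hn (h₅ u v hu hs hv),
      fun u hu v ⟨⟨z, hz, hv⟩, hn⟩ hy => hn (h₆ u z v hu hz hv hy),
      fun u hu v ⟨⟨z, hz, hs⟩, hs'⟩ => h₇ u z v hu hz hs hs'⟩,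
      fun r hr u v hu ⟨hc, hn⟩ hv => hn (h₃ r hr u v hu hc hv)⟩

end Witness

theorem Set.Finite.wellFoundedOn_of_trans_of_irrefl {α : Type*} {s : Set α}
    {r : α → α → Prop} (hs : s.Finite)
    (htrans : ∀ a ∈ s, ∀ b ∈ s, ∀ c ∈ s, r a b → r b c → r a c)
    (hirrefl : ∀ a ∈ s, ¬ r a a) : s.WellFoundedOn r := by
  have := hs.to_subtype
  have : IsTrans s (Subrel r (· ∈ s)) := ⟨fun a b c => htrans a a.2 b b.2 c c.2⟩
  have : Std.Irrefl (Subrel r (· ∈ s)) := ⟨fun a => hirrefl a a.2⟩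
  exact Finite.wellFounded_of_trans_of_irrefl _

section Window

variable {T N D : Type} (I : Voc T N → D → D → Prop) (x y : D)

def windowRel (s : Symbol T N) (p q : D) : Prop :=
  I (symVoc s) p q ∧ I .alpha x p ∧ I .alpha q y

def sigmaSources : Set D :=
  {d | I .alpha x d ∧ ∃ e, sigmaRel I d e ∧ I .alpha e y}

end Window

namespace EGWitness

variable {T : Type} {G : ContextFreeGrammar T} {D : Type} {I : Voc T G.NT → D → D → Prop}
  {x y : D}

theorem relChain_windowRel_of_derives (W : EGWitness G I x y)
    (hG : ∀ r ∈ G.rules, r.output ≠ []) {γ τ : List (Symbol T G.NT)} (h : G.Derives γ τ)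
    {p q : D}    (hτ : RelChain (windowRel I x y) τ p q) : RelChain (windowRel I x y) γ p q := by
  refine RelChain.of_derives (fun r hr p q hc => ⟨?_, ?_, ?_⟩) h hτ
  · exact W.nt_of_rule r hr p q (hc.left_of_ne_nil (hG r hr) fun _ _ _ h => h.2.1)
      (hc.mono fun _ _ _ h => h.1) (hc.right_of_ne_nil (hG r hr) fun _ _ _ h => h.2.2)
  · exact hc.left_of_ne_nil (hG r hr) fun _ _ _ h => h.2.1
  · exact hc.right_of_ne_nil (hG r hr) fun _ _ _ h => h.2.2

theorem alpha_right_of_mem_sigmaSources (W : EGWitness G I x y) {d : D}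
    (hd : d ∈ sigmaSources I x y) : I .alpha d y :=
  have ⟨hxd, _, hde, hey⟩ := hd
  W.alpha_of_sigma d _ hxd hde hey

theorem wellFoundedOn_sigmaSources [Finite T] (W : EGWitness G I x y)
    (hfin : DA.FiniteStruct I) : (sigmaSources I x y).WellFoundedOn (I .X) := by
  refine Set.Finite.wellFoundedOn_of_trans_of_irrefl ?_
    (fun a ha b _ c hc hab hbc =>
      W.X_trans a b c ha.1 hab hbc (W.alpha_right_of_mem_sigmaSources hc))
    (fun a ⟨hxa, e, hae, hey⟩ haa => W.not_X_sigma a a e hxa haa hae hae hey)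
  refine (Set.finite_iUnion fun b => (hfin (.term b)).image Prod.fst).subset ?_
  rintro d ⟨-, e, ⟨b, hb⟩, -⟩
  exact Set.mem_iUnion.mpr ⟨b, (d, e), hb, rfl⟩

theorem exists_not_mem_language [Finite T] (W : EGWitness G I x y)
    (hG : ∀ r ∈ G.rules, r.output ≠ []) (hfin : DA.FiniteStruct I) :
    ∃ w : List T, w ≠ [] ∧ w ∉ G.language := by
  obtain ⟨u₀, v₀, hxu₀, ⟨b₀, hb₀⟩, hv₀⟩ := W.exists_sigma_omega
  have hv₀y := W.alpha_of_omega u₀ v₀ hxu₀ ⟨b₀, hb₀⟩ hv₀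
  refine (W.wellFoundedOn_sigmaSources hfin).induction (x := u₀) (P := fun d =>
      ∀ w : List T, w ≠ [] → RelChain (windowRel I x y) (w.map .terminal) d v₀ →
        ∃ w : List T, w ≠ [] ∧ w ∉ G.language)
    ⟨hxu₀, v₀, ⟨b₀, hb₀⟩, hv₀y⟩ ?_ [b₀] (List.cons_ne_nil _ _)
    (RelChain.singleton_iff.mpr ⟨hb₀, hxu₀, hv₀y⟩)
  intro d hd ih w hw hc
  have hdy := W.alpha_right_of_mem_sigmaSources hd
  by_cases hpred : ∃ z, I .alpha x z ∧ sigmaRel I z d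
  · obtain ⟨z, hxz, b, hzd⟩ := hpred
    exact ih z ⟨hxz, d, ⟨b, hzd⟩, hdy⟩ (W.X_of_sigma z d hxz ⟨b, hzd⟩ hdy) (b :: w)
      (List.cons_ne_nil _ _) ⟨d, ⟨hzd, hxz, hdy⟩, hc⟩
  · refine ⟨w, hw, fun hwL => ?_⟩
    have hS := RelChain.singleton_iff.mp
      (W.relChain_windowRel_of_derives hG ((G.mem_language_iff w).mp hwL) hc)
    exact W.not_initial_omega d v₀ hd.1 (fun z hxz hzd => hpred ⟨z, hxz, hzd⟩) hS.1 hv₀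

end EGWitness

theorem List.extract_append_extract {α : Type*} (l : List α) {i j k : ℕ} (hij : i ≤ j)
    (hjk : j ≤ k) : l.extract i j ++ l.extract j k = l.extract i k := by
  change (l.drop i).take (j - i) ++ (l.drop j).take (k - j) = (l.drop i).take (k - i)
  rw [show k - i = (j - i) + (k - j) by omega, List.take_add, List.drop_drop,
    show i + (j - i) = j by omega]

theorem List.extract_succ {α : Type*} (l : List α) {i : ℕ} (hi : i < l.length) :
    l.extract i (i + 1) = [l[i]] := by
  change (l.drop i).take (i + 1 - i) = _
  rw [List.drop_eq_getElem_cons hi, Nat.add_sub_cancel_left]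
  rfl

section WordModel

variable {T : Type} (G : ContextFreeGrammar T) (w : List T)

/-- Positions of `w` are `some 0, …, some |w|`; the extra point `none` is both endpoints of
`e_G`. -/
def wordStruct : Voc T G.NT → Option ℕ → Option ℕ → Prop
  | .term b, p, q => ∃ i, p = some i ∧ q = some (i + 1) ∧ w[i]? = some b
  | .nt Z, p, q => ∃ i j, p = some i ∧ q = some j ∧ i ≤ j ∧ j ≤ w.length ∧
      G.Derives [.nonterminal Z] ((w.extract i j).map .terminal)
  | .alpha, p, q => ∃ i ≤ w.length, (p = none ∧ q = some i) ∨ (p = some i ∧ q = none)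
  | .omega, p, q => p = some w.length ∧ q = none
  | .X, p, q => ∃ i j, p = some i ∧ q = some j ∧ i < j ∧ j ≤ w.length

variable {G w}

theorem wordStruct_alpha_none_left {u : Option ℕ} :
    wordStruct G w .alpha none u ↔ ∃ i ≤ w.length, u = some i := by
  simp [wordStruct]

theorem wordStruct_alpha_none_right {v : Option ℕ} :
    wordStruct G w .alpha v none ↔ ∃ i ≤ w.length, v = some i := by
  simp [wordStruct]

theorem sigmaRel_wordStruct {u v : Option ℕ} :
    sigmaRel (wordStruct G w) u v ↔ ∃ i < w.length, u = some i ∧ v = some (i + 1) := by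
  simp only [sigmaRel, wordStruct]
  constructor
  · rintro ⟨b, i, rfl, rfl, hb⟩
    exact ⟨i, (List.getElem?_eq_some_iff.mp hb).1, rfl, rfl⟩
  · rintro ⟨i, hi, rfl, rfl⟩
    exact ⟨w[i], i, rfl, rfl, List.getElem?_eq_getElem hi⟩

theorem finiteStruct_wordStruct : DA.FiniteStruct (wordStruct G w) := by
  have hS : (insert none (some '' Set.Iic w.length)).Finite :=
    ((Set.finite_Iic w.length).image _).insert none
  intro a
  refine (hS.prod hS).subset ?_
  rintro ⟨p, q⟩ hpq
  cases a with
  | term b =>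
    obtain ⟨i, rfl, rfl, hb⟩ := hpq
    have := (List.getElem?_eq_some_iff.mp hb).1
    constructor <;> simp <;> omega
  | nt Z =>
    obtain ⟨i, j, rfl, rfl, hij, hj, -⟩ := hpq
    constructor <;> simp <;> omega
  | alpha =>
    obtain ⟨i, hi, ⟨rfl, rfl⟩ | ⟨rfl, rfl⟩⟩ := hpq <;> constructor <;> simp [hi]
  | omega =>
    obtain ⟨rfl, rfl⟩ := hpq
    constructor <;> simp
  | X =>
    obtain ⟨i, j, rfl, rfl, hij, hj⟩ := hpq
    constructor <;> simp <;> omega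

theorem wordStruct_symVoc {s : Symbol T G.NT} {i : ℕ} {q : Option ℕ}
    (h : wordStruct G w (symVoc s) (some i) q) :
    ∃ j, q = some j ∧ i ≤ j ∧ j ≤ w.length ∧
      G.Derives [s] ((w.extract i j).map .terminal) := by
  cases s with
  | terminal b =>
    obtain ⟨i, hi, rfl, hb⟩ := h
    cases hi
    obtain ⟨hlt, rfl⟩ := List.getElem?_eq_some_iff.mp hb
    refine ⟨i + 1, rfl, by omega, hlt, ?_⟩
    rw [List.extract_succ w hlt]
    exact ContextFreeGrammar.Derives.refl _
  | nonterminal Z =>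
    obtain ⟨i, j, hi, rfl, hij, hj, hd⟩ := h
    cases hi
    exact ⟨j, rfl, hij, hj, hd⟩

theorem derives_of_relChain_wordStruct {γ : List (Symbol T G.NT)} {i : ℕ} {q : Option ℕ}
    (hi : i ≤ w.length) (h : RelChain (fun s => wordStruct G w (symVoc s)) γ (some i) q) :
    ∃ j, q = some j ∧ i ≤ j ∧ j ≤ w.length ∧
      G.Derives γ ((w.extract i j).map .terminal) := by
  induction γ generalizing i with
  | nil =>
    cases RelChain.nil_iff.mp h
    exact ⟨i, rfl, le_rfl, hi, by simpa using ContextFreeGrammar.Derives.refl _⟩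
  | cons s γ ih =>
    obtain ⟨m, hs, hγ⟩ := h
    obtain ⟨j, rfl, hij, hj, hds⟩ := wordStruct_symVoc hs
    obtain ⟨k, rfl, hjk, hk, hdγ⟩ := ih hj hγ
    refine ⟨k, rfl, hij.trans hjk, hk, ?_⟩
    rw [← List.extract_append_extract w hij hjk, List.map_append, ← List.singleton_append]
    exact (hds.append_right _).trans (hdγ.append_left _)

end WordModel

theorem egWitness_wordStruct {T : Type} {G : ContextFreeGrammar T} {w : List T} (hw : w ≠ [])
    (hwL : w ∉ G.language) : EGWitness G (wordStruct G w) none none where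
  exists_sigma_omega := by
    have hn := List.length_pos_iff.mpr hw
    refine ⟨some (w.length - 1), some w.length,
      wordStruct_alpha_none_left.mpr ⟨_, by omega, rfl⟩,
      sigmaRel_wordStruct.mpr ⟨_, by omega, rfl, by congr; omega⟩, rfl, rfl⟩
  alpha_of_omega := by
    rintro u v - - ⟨rfl, -⟩
    exact wordStruct_alpha_none_right.mpr ⟨_, le_rfl, rfl⟩
  alpha_of_sigma := by
    rintro u v hu - -
    obtain ⟨i, hi, rfl⟩ := wordStruct_alpha_none_left.mp hu
    exact wordStruct_alpha_none_right.mpr ⟨i, hi, rfl⟩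
  nt_of_rule := by
    rintro r hr u v hu hc -
    obtain ⟨i, hi, rfl⟩ := wordStruct_alpha_none_left.mp hu
    obtain ⟨j, rfl, hij, hj, hd⟩ := derives_of_relChain_wordStruct hi hc
    exact ⟨i, j, rfl, rfl, hij, hj,
      ContextFreeGrammar.Produces.trans_derives
        ⟨r, hr, ContextFreeRule.Rewrites.input_output⟩ hd⟩
  not_initial_omega := by
    rintro u v hu hfirst ⟨i, j, rfl, rfl, hij, hj, hd⟩ ⟨hjn, -⟩
    cases hjn
    rcases Nat.eq_zero_or_pos i with rfl | hi
    · exact hwL ((G.mem_language_iff w).mpr (by simpa using hd))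
    · exact hfirst (some (i - 1)) (wordStruct_alpha_none_left.mpr ⟨_, by omega, rfl⟩)
        (sigmaRel_wordStruct.mpr ⟨i - 1, by omega, rfl, by congr; omega⟩)
  X_of_sigma := by
    rintro u v - hs -
    obtain ⟨i, hi, rfl, rfl⟩ := sigmaRel_wordStruct.mp hs
    exact ⟨i, i + 1, rfl, rfl, by omega, hi⟩
  X_trans := by
    rintro u z v - ⟨i, j, rfl, rfl, hij, -⟩ ⟨j', k, hj', rfl, hjk, hk⟩ -
    cases hj'
    exact ⟨i, k, rfl, rfl, hij.trans hjk, hk⟩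
  not_X_sigma := by
    rintro u z v - ⟨i, j, rfl, rfl, hij, -⟩ hzv huv -
    obtain ⟨j', -, hj', rfl⟩ := sigmaRel_wordStruct.mp hzv
    obtain ⟨i', -, hi', hv⟩ := sigmaRel_wordStruct.mp huv
    cases hj'; cases hi'; cases hv
    omega

/-- A context-free grammar G (over a nonempty finite terminal alphabet, without
empty productions) fails to generate some nonempty word over Σ if and only if
the expression e_G is finitely satisfiable. -/
theorem stmt2 (T : Type) [Fintype T] [Nonempty T] (G : ContextFreeGrammar T)
    (hG : ∀ r ∈ G.rules, r.output ≠ []) :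
    (∃ w : List T, w ≠ [] ∧ w ∉ G.language) ↔ DA.FinSat (eG T G) := by
  constructor
  · rintro ⟨w, hw, hwL⟩
    exact ⟨Option ℕ, wordStruct G w, finiteStruct_wordStruct, none, none,
      (eval_eG_iff G _ _ _ hG).mpr (egWitness_wordStruct hw hwL)⟩
  · rintro ⟨D, I, hfin, x, y, hxy⟩
    exact ((eval_eG_iff G I x y hG).mp hxy).exists_not_mem_language hG hfin
end

section
/- Let Γ = {a₁, …, a_k} be a finite vocabulary and let b, c be two symbols not in Γ. For a DA expression e over Γ, let e' be the expression over {b, c} obtained from e by replacing every occurrence of aᵢ (for i = 1, …, k) by b(c ∩ c^{i+1})b, where c^j denotes the j-fold composition c⋯c. Then e is finitely satisfiable if and only if e' is finitely satisfiable. -/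
namespace DA

/-- Substituting an expression for each relation name. -/
def subst {Γ Δ : Type} (σ : Γ → DA Δ) : DA Γ → DA Δ
  | .var a => σ a
  | .union e f => .union (subst σ e) (subst σ f)
  | .inter e f => .inter (subst σ e) (subst σ f)
  | .diff e f => .diff (subst σ e) (subst σ f)
  | .comp e f => .comp (subst σ e) (subst σ f)

/-- pow1 e n is the (n+1)-fold composition e ⋯ e, i.e. e^(n+1). -/
def pow1 {Γ : Type} (e : DA Γ) : ℕ → DA Γ
  | 0 => e
  | n + 1 => .comp e (pow1 e n)

end DA

/-- The vocabulary with two relation names b and c. -/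
inductive BC : Type where
  | b : BC
  | c : BC

/-- The substitution sending the i-th relation name aᵢ of Γ = {a₁, …, a_k}
(so i = j + 1 for the zero-based index j : Fin k) to b(c ∩ c^(i+1))b. -/
def sigmaBC (k : ℕ) : Fin k → DA BC := fun j =>
  .comp (.var .b)
    (.comp (.inter (.var .c) (DA.pow1 (.var .c) (j.val + 1)))
           (.var .b))


namespace DA

theorem eval_subst' {Γ Δ D : Type} (σ : Γ → DA Δ) (J : Δ → D → D → Prop) (e : DA Γ) :
    ∀ x y, eval J (subst σ e) x y ↔ eval (fun a => eval J (σ a)) e x y := by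
  induction e <;> intro x y <;> simp [subst, eval, *]

theorem eval_finite' {Γ D : Type} {I : Γ → D → D → Prop} (h : FiniteStruct I) (e : DA Γ) :
    {p : D × D | eval I e p.1 p.2}.Finite := by
  induction e with
  | var a => exact h a
  | union e f he hf =>
      exact (he.union hf).subset (by intro p hp; cases hp <;> simp [Set.mem_union] <;> tauto)
  | inter e f he hf => exact he.subset (by intro p hp; exact hp.1)
  | diff e f he hf => exact he.subset (by intro p hp; exact hp.1)
  | comp e f he hf =>
      refine ((he.image Prod.fst).prod (hf.image Prod.snd)).subset ?_
      rintro ⟨x, y⟩ ⟨z, h1, h2⟩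
      exact ⟨⟨(x, z), h1, rfl⟩, ⟨(z, y), h2, rfl⟩⟩

theorem eval_embed' {Γ D D' : Type} {ι : D → D'} (hι : Function.Injective ι)
    {I : Γ → D → D → Prop} {I' : Γ → D' → D' → Prop}
    (h : ∀ a u v, I' a u v ↔ ∃ x y, I a x y ∧ u = ι x ∧ v = ι y)
    (e : DA Γ) :
    (∀ u v, eval I' e u v → (∃ x, u = ι x) ∧ (∃ y, v = ι y)) ∧
    (∀ x y, eval I' e (ι x) (ι y) ↔ eval I e x y) := by
  induction e with
  | var a =>
      constructor
      · intro u v hv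
        simp only [eval] at hv
        rw [h] at hv
        obtain ⟨x, y, _, rfl, rfl⟩ := hv
        exact ⟨⟨x, rfl⟩, ⟨y, rfl⟩⟩
      · intro x y
        simp only [eval]
        rw [h]
        constructor
        · rintro ⟨x', y', hI, hx, hy⟩
          rwa [hι hx, hι hy]
        · exact fun hI => ⟨x, y, hI, rfl, rfl⟩
  | union e f he hf =>
      exact ⟨fun u v hv => hv.elim (he.1 u v) (hf.1 u v),
        fun x y => by simp only [eval, he.2, hf.2]⟩
  | inter e f he hf =>
      exact ⟨fun u v hv => he.1 u v hv.1, fun x y => by simp only [eval, he.2, hf.2]⟩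
  | diff e f he hf =>
      exact ⟨fun u v hv => he.1 u v hv.1, fun x y => by simp only [eval, he.2, hf.2]⟩
  | comp e f he hf =>
      constructor
      · rintro u v ⟨z, h1, h2⟩
        exact ⟨(he.1 u z h1).1, (hf.1 z v h2).2⟩
      · intro x y
        constructor
        · rintro ⟨z, h1, h2⟩
          obtain ⟨z', rfl⟩ := (he.1 _ _ h1).2
          exact ⟨z', (he.2 _ _).1 h1, (hf.2 _ _).1 h2⟩
        · rintro ⟨z, h1, h2⟩
          exact ⟨ι z, (he.2 _ _).2 h1, (hf.2 _ _).2 h2⟩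

end DA

open DA

/-- Gadget domain. -/
abbrev GD (k : ℕ) (D : Type) : Type := D ⊕ (Fin k × D × D × ℕ)

def Jstruct {k : ℕ} {D : Type} (I : Fin k → D → D → Prop) : BC → GD k D → GD k D → Prop
  | .b, u, v => (∃ j x y, I j x y ∧ u = .inl x ∧ v = .inr (j, x, y, 0)) ∨
                (∃ j x y, I j x y ∧ u = .inr (j, x, y, j.val + 2) ∧ v = .inl y)
  | .c, u, v => ∃ j x y, I j x y ∧
      ((∃ i, i + 1 ≤ j.val + 2 ∧ u = .inr (j, x, y, i) ∧ v = .inr (j, x, y, i + 1)) ∨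
       (u = .inr (j, x, y, 0) ∧ v = .inr (j, x, y, j.val + 2)))

lemma cpath_char {k : ℕ} {D : Type} (I : Fin k → D → D → Prop) :
    ∀ (n : ℕ) (u v : GD k D), eval (Jstruct I) (pow1 (.var .c) n) u v →
      ∃ j x y i i', I j x y ∧ u = .inr (j, x, y, i) ∧ v = .inr (j, x, y, i') ∧
        ((i' = i + n + 1 ∧ i' ≤ j.val + 2) ∨ (n = 0 ∧ i = 0 ∧ i' = j.val + 2)) := by
  intro n
  induction n with
  | zero =>
      intro u v hv
      simp only [pow1, eval, Jstruct] at hv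
      obtain ⟨j, x, y, hI, hv⟩ := hv
      rcases hv with ⟨i, hle, rfl, rfl⟩ | ⟨rfl, rfl⟩
      · exact ⟨j, x, y, i, i + 1, hI, rfl, rfl, Or.inl ⟨rfl, hle⟩⟩
      · exact ⟨j, x, y, 0, j.val + 2, hI, rfl, rfl, Or.inr ⟨rfl, rfl, rfl⟩⟩
  | succ n ih =>
      intro u v hv
      obtain ⟨w, h1, h2⟩ := hv
      simp only [eval, Jstruct] at h1
      obtain ⟨j, x, y, hI, h1⟩ := h1
      obtain ⟨j', x', y', i, i', hI', hw, rfl, hcond⟩ := ih w v h2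
      rcases h1 with ⟨i₀, hle, rfl, hw'⟩ | ⟨rfl, hw'⟩
      · rw [hw'] at hw
        obtain ⟨rfl, rfl, rfl, hi⟩ : j' = j ∧ x' = x ∧ y' = y ∧ i = i₀ + 1 := by
          injection hw with hw; injection hw with h1 hw; injection hw with h2 hw
          injection hw with h3 h4
          exact ⟨h1.symm, h2.symm, h3.symm, h4.symm⟩
        subst hi
        rcases hcond with ⟨rfl, hle'⟩ | ⟨_, h0, _⟩
        · exact ⟨_, _, _, i₀, _, hI', rfl, rfl, Or.inl ⟨by omega, hle'⟩⟩
        · omega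
      · rw [hw'] at hw
        obtain ⟨rfl, rfl, rfl, hi⟩ : j' = j ∧ x' = x ∧ y' = y ∧ i = j.val + 2 := by
          injection hw with hw; injection hw with h1 hw; injection hw with h2 hw
          injection hw with h3 h4
          exact ⟨h1.symm, h2.symm, h3.symm, h4.symm⟩
        rcases hcond with ⟨_, hle'⟩ | ⟨_, h0, _⟩ <;> omega

lemma cpath_chain {k : ℕ} {D : Type} (I : Fin k → D → D → Prop) (j : Fin k) (x y : D)
    (hI : I j x y) :
    ∀ (n i : ℕ), i + n + 1 ≤ j.val + 2 →
      eval (Jstruct I) (pow1 (.var .c) n) (.inr (j, x, y, i)) (.inr (j, x, y, i + n + 1)) := by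
  intro n
  induction n with
  | zero =>
      intro i h
      show Jstruct I .c _ _
      exact ⟨j, x, y, hI, Or.inl ⟨i, by omega, rfl, rfl⟩⟩
  | succ n ih =>
      intro i h
      refine ⟨.inr (j, x, y, i + 1), ⟨j, x, y, hI, Or.inl ⟨i, by omega, rfl, rfl⟩⟩, ?_⟩
      have heq : i + (n + 1) + 1 = (i + 1) + n + 1 := by omega
      rw [heq]
      exact ih (i + 1) (by omega)

lemma gadget_correct {k : ℕ} {D : Type} (I : Fin k → D → D → Prop) (j' : Fin k)
    (u v : GD k D) :
    eval (Jstruct I) (sigmaBC k j') u v ↔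
      ∃ x y, I j' x y ∧ u = .inl x ∧ v = .inl y := by
  constructor
  · rintro ⟨z, hb1, w, ⟨hc, hp⟩, hb2⟩
    obtain ⟨j₃, x₃, y₃, i, i', hI₃, rfl, rfl, hcond⟩ := cpath_char I _ z w hp
    rcases hb1 with ⟨j, x, y, hI, rfl, hz⟩ | ⟨j, x, y, hI, _, hz⟩
    · obtain ⟨rfl, rfl, rfl, hi0⟩ : j₃ = j ∧ x₃ = x ∧ y₃ = y ∧ i = 0 := by
        injection hz with hz; injection hz with h1 hz; injection hz with h2 hz
        injection hz with h3 h4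
        exact ⟨h1, h2, h3, h4⟩
      rcases hb2 with ⟨j₂, x₂, y₂, hI₂, hw, rfl⟩ | ⟨j₂, x₂, y₂, hI₂, hw, rfl⟩
      · exact absurd hw (by simp)
      · obtain ⟨rfl, rfl, rfl, hi'⟩ : j₂ = j₃ ∧ x₂ = x₃ ∧ y₂ = y₃ ∧ j₂.val + 2 = i' := by
          injection hw with hw; injection hw with h1 hw; injection hw with h2 hw
          injection hw with h3 h4
          exact ⟨h1.symm, h2.symm, h3.symm, h4.symm⟩
        rcases hcond with ⟨hiv, _⟩ | ⟨h0, _, _⟩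
        · have : j₂ = j' := by apply Fin.ext; omega
          subst this
          exact ⟨_, _, hI₃, rfl, rfl⟩
        · omega
    · exact absurd hz (by simp)
  · rintro ⟨x, y, hI, rfl, rfl⟩
    refine ⟨.inr (j', x, y, 0), Or.inl ⟨j', x, y, hI, rfl, rfl⟩,
      .inr (j', x, y, j'.val + 2), ⟨⟨j', x, y, hI, Or.inr ⟨rfl, rfl⟩⟩, ?_⟩,
      Or.inr ⟨j', x, y, hI, rfl, rfl⟩⟩
    have := cpath_chain I j' x y hI (j'.val + 1) 0 (by omega)
    simpa using this

lemma Jstruct_finite {k : ℕ} {D : Type} {I : Fin k → D → D → Prop}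
    (h : FiniteStruct I) : FiniteStruct (Jstruct I) := by
  intro a
  cases a with
  | b =>
      have : {p : GD k D × GD k D | Jstruct I .b p.1 p.2} ⊆
          ⋃ (j : Fin k),
            ((fun q : D × D => ((Sum.inl q.1 : GD k D), (Sum.inr (j, q.1, q.2, 0) : GD k D))) ''
              {p | I j p.1 p.2}) ∪
            ((fun q : D × D =>
                ((Sum.inr (j, q.1, q.2, j.val + 2) : GD k D), (Sum.inl q.2 : GD k D))) ''
              {p | I j p.1 p.2}) := by
        rintro ⟨u, v⟩ hp
        rcases hp with ⟨j, x, y, hI, rfl, rfl⟩ | ⟨j, x, y, hI, rfl, rfl⟩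
        · exact Set.mem_iUnion.2 ⟨j, Or.inl ⟨(x, y), hI, rfl⟩⟩
        · exact Set.mem_iUnion.2 ⟨j, Or.inr ⟨(x, y), hI, rfl⟩⟩
      exact Set.Finite.subset
        (Set.finite_iUnion fun j => ((h j).image _).union ((h j).image _)) this
  | c =>
      have : {p : GD k D × GD k D | Jstruct I .c p.1 p.2} ⊆
          (⋃ (j : Fin k), ⋃ (i : Fin (k + 2)),
            ((fun q : D × D => ((Sum.inr (j, q.1, q.2, i.val) : GD k D),
                (Sum.inr (j, q.1, q.2, i.val + 1) : GD k D))) '' {p | I j p.1 p.2})) ∪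
          (⋃ (j : Fin k),
            ((fun q : D × D => ((Sum.inr (j, q.1, q.2, 0) : GD k D),
                (Sum.inr (j, q.1, q.2, j.val + 2) : GD k D))) '' {p | I j p.1 p.2})) := by
        rintro ⟨u, v⟩ ⟨j, x, y, hI, hp⟩
        rcases hp with ⟨i, hle, rfl, rfl⟩ | ⟨rfl, rfl⟩
        · refine Or.inl (Set.mem_iUnion.2 ⟨j, Set.mem_iUnion.2
            ⟨⟨i, by omega⟩, ⟨(x, y), hI, rfl⟩⟩⟩)
        · exact Or.inr (Set.mem_iUnion.2 ⟨j, ⟨(x, y), hI, rfl⟩⟩)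
      refine Set.Finite.subset (Set.Finite.union ?_ ?_) this
      · exact Set.finite_iUnion fun j => Set.finite_iUnion fun i => (h j).image _
      · exact Set.finite_iUnion fun j => (h j).image _

/-- For e over Γ = {a₁, …, a_k}, let e\´ over {b,c} replace every aᵢ by b(c ∩ c^(i+1))b.
Then e is finitely satisfiable iff e\´ is. -/
theorem stmt5 (k : ℕ) (e : DA (Fin k)) :
    DA.FinSat e ↔ DA.FinSat (DA.subst (sigmaBC k) e) := by
  constructor
  · rintro ⟨D, I, hfin, x, y, hxy⟩
    refine ⟨GD k D, Jstruct I, Jstruct_finite hfin, Sum.inl x, Sum.inl y, ?_⟩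
    rw [eval_subst']
    have hemb := eval_embed' (ι := (Sum.inl : D → GD k D)) (fun _ _ h => by injection h)
      (I := I) (I' := fun a => eval (Jstruct I) (sigmaBC k a))
      (fun a u v => gadget_correct I a u v) e
    exact (hemb.2 x y).2 hxy
  · rintro ⟨D, J, hfin, x, y, hxy⟩
    rw [eval_subst'] at hxy
    exact ⟨D, fun a => eval J (sigmaBC k a), fun a => eval_finite' hfin (sigmaBC k a),
      x, y, hxy⟩
end

section
/- Let Γ = {a₁, …, a_k} and let b, c be two symbols not in Γ; for a DA expression e over Γ let e' over {b,c} be obtained by replacing every occurrence of aᵢ by b(c ∩ c^{i+1})b. For every finite structure K over Γ there exists a finite structure J over {b, c} such that e(K) = e'(J) for every DA expression e over Γ. (Such a J is obtained by replacing, for each i and each pair (x,y) ∈ aᵢ^K, the edge by fresh distinct elements u₁, …, u_{i+2} disjoint from the active domain of K and from other such sets, with b-edges x → u₁ and u_{i+2} → y, and c-edges forming the chain u₁ → u₂ → ⋯ → u_{i+2} together with the shortcut edge u₁ → u_{i+2}.) -/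
namespace Relation

variable {α β γ δ ε : Type*} {r s : α → β → Prop} {f : α → γ} {g : β → δ}

lemma map_sup : Relation.Map (r ⊔ s) f g = Relation.Map r f g ⊔ Relation.Map s f g := by
  ext c d
  simp only [Pi.sup_apply, map_apply, sup_Prop_eq]
  grind

lemma map_inf_of_injective (hf : f.Injective) (hg : g.Injective) :
    Relation.Map (r ⊓ s) f g = Relation.Map r f g ⊓ Relation.Map s f g := by
  ext c d
  simp only [Pi.inf_apply, map_apply, inf_Prop_eq]
  grind [Function.Injective]

lemma map_sdiff_of_injective (hf : f.Injective) (hg : g.Injective) :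
    Relation.Map (r \ s) f g = Relation.Map r f g \ Relation.Map s f g := by
  ext c d
  simp only [Pi.sdiff_apply, map_apply, sdiff_eq, Pi.inf_apply, Pi.compl_apply, inf_Prop_eq,
    compl_iff_not]
  grind [Function.Injective]

lemma map_comp_of_injective {t : β → ε → Prop} {h : ε → δ} (hg : g.Injective) :
    Relation.Map (Relation.Comp r t) f h =
      Relation.Comp (Relation.Map r f g) (Relation.Map t g h) := by
  ext c d
  simp only [Comp, map_apply]
  grind [Function.Injective]

end Relation

namespace DA

variable {Γ Δ D D' : Type} {σ : Γ → DA Δ} {I : Γ → D → D → Prop} {J : Δ → D' → D' → Prop}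
  {ι : D → D'}

theorem eval_subst_eq_map (hι : ι.Injective)
    (hσ : ∀ a, eval J (σ a) = Relation.Map (I a) ι ι) :
    ∀ e, eval J (subst σ e) = Relation.Map (eval I e) ι ι
  | .var a => hσ a
  | .union e f =>
    (congrArg₂ (· ⊔ ·) (eval_subst_eq_map hι hσ e) (eval_subst_eq_map hι hσ f)).trans
      Relation.map_sup.symm
  | .inter e f =>
    (congrArg₂ (· ⊓ ·) (eval_subst_eq_map hι hσ e) (eval_subst_eq_map hι hσ f)).trans
      (Relation.map_inf_of_injective hι hι).symm
  | .diff e f =>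
    (congrArg₂ (· \ ·) (eval_subst_eq_map hι hσ e) (eval_subst_eq_map hι hσ f)).trans
      (Relation.map_sdiff_of_injective hι hι).symm
  | .comp e f =>
    (congrArg₂ Relation.Comp (eval_subst_eq_map hι hσ e) (eval_subst_eq_map hι hσ f)).trans
      (Relation.map_comp_of_injective hι).symm

end DA

namespace BC

variable {k : ℕ} {D : Type}

/-- `vertex i x y m` is the vertex `u_{m+1}` of the gadget replacing an edge `(x, y)` of
`a_{i+1}`; the gadget's vertices are at the levels `m = 0, …, i + 2`. -/
def vertex (i : Fin k) (x y : D) (m : ℕ) : D ⊕ (Fin k × D × D × ℕ) := .inr (i, x, y, m)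

@[simp]
lemma vertex_inj {i i' : Fin k} {x x' y y' : D} {m m' : ℕ} :
    vertex i x y m = vertex i' x' y' m' ↔ i = i' ∧ x = x' ∧ y = y' ∧ m = m' := by
  simp [vertex]

@[simp]
lemma inl_ne_vertex {i : Fin k} {x' x y : D} {m : ℕ} : Sum.inl x' ≠ vertex i x y m := Sum.inl_ne_inr

@[simp]
lemma vertex_ne_inl {i : Fin k} {x' x y : D} {m : ℕ} : vertex i x y m ≠ Sum.inl x' := Sum.inr_ne_inl

variable (K : Fin k → D → D → Prop)

def gadget : BC → D ⊕ (Fin k × D × D × ℕ) → D ⊕ (Fin k × D × D × ℕ) → Prop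
  | .b => fun p q => ∃ i x y, K i x y ∧
      (p = .inl x ∧ q = vertex i x y 0 ∨ p = vertex i x y (i + 2) ∧ q = .inl y)
  | .c => fun p q => ∃ i x y m m', K i x y ∧ p = vertex i x y m ∧ q = vertex i x y m' ∧
      (m' = m + 1 ∧ m' ≤ i + 2 ∨ m = 0 ∧ m' = i + 2)

lemma eval_pow1_c_gadget (n : ℕ) (p q : D ⊕ (Fin k × D × D × ℕ)) :
    DA.eval (gadget K) (DA.pow1 (.var c) n) p q ↔
      ∃ i x y m m', K i x y ∧ p = vertex i x y m ∧ q = vertex i x y m' ∧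
        (m' = m + n + 1 ∧ m' ≤ i + 2 ∨ n = 0 ∧ m = 0 ∧ m' = i + 2) := by
  induction n generalizing p with
  | zero => simp [DA.pow1, DA.eval, gadget]
  | succ n ih =>
    simp only [DA.pow1, DA.eval, ih, gadget]
    constructor
    · rintro ⟨z, ⟨i, x, y, m, l, hK, rfl, rfl, hml⟩, i', x', y', l', m', -, hz, rfl, hlm⟩
      obtain ⟨rfl, rfl, rfl, rfl⟩ := vertex_inj.mp hz
      exact ⟨i, x, y, m, m', hK, rfl, rfl, by omega⟩
    · rintro ⟨i, x, y, m, m', hK, rfl, rfl, hmm' | ⟨⟨⟩, -⟩⟩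
      exact ⟨vertex i x y (m + 1), ⟨i, x, y, m, m + 1, hK, rfl, rfl, by omega⟩,
        i, x, y, m + 1, m', hK, rfl, rfl, by omega⟩

lemma eval_shortcut_gadget (j : Fin k) (p q : D ⊕ (Fin k × D × D × ℕ)) :
    DA.eval (gadget K) (.inter (.var c) (DA.pow1 (.var c) (j + 1))) p q ↔
      ∃ x y, K j x y ∧ p = vertex j x y 0 ∧ q = vertex j x y (j + 2) := by
  simp only [DA.eval, eval_pow1_c_gadget, gadget]
  constructor
  · rintro ⟨⟨i, x, y, m, m', hK, rfl, rfl, hstep⟩, i', x', y', l, l', -, hp, hq, hpath⟩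
    obtain ⟨rfl, rfl, rfl, rfl⟩ := vertex_inj.mp hp
    obtain ⟨-, -, -, rfl⟩ := vertex_inj.mp hq
    obtain rfl : m = 0 := by omega
    obtain rfl : i = j := Fin.ext (by omega)
    obtain rfl : m' = i + 2 := by omega
    exact ⟨x, y, hK, rfl, rfl⟩
  · rintro ⟨x, y, hK, rfl, rfl⟩
    exact ⟨⟨j, x, y, 0, j + 2, hK, rfl, rfl, by omega⟩, j, x, y, 0, j + 2, hK, rfl, rfl, by omega⟩

lemma eval_sigmaBC_gadget (j : Fin k) :
    DA.eval (gadget K) (sigmaBC k j) = Relation.Map (K j) Sum.inl Sum.inl := by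
  ext p q
  simp only [sigmaBC, DA.eval.eq_5, DA.eval.eq_1, eval_shortcut_gadget, Relation.map_apply,
    gadget]
  constructor
  · rintro ⟨z, ⟨i, x, y, -, ⟨rfl, rfl⟩ | ⟨-, rfl⟩⟩, w, ⟨x', y', hK, hz, rfl⟩, i', x'', y'', -,
      ⟨hw, -⟩ | ⟨hw, rfl⟩⟩
    all_goals simp_all
  · rintro ⟨x, y, hK, rfl, rfl⟩
    exact ⟨vertex j x y 0, ⟨j, x, y, hK, .inl ⟨rfl, rfl⟩⟩, vertex j x y (j + 2),
      ⟨x, y, hK, rfl, rfl⟩, j, x, y, hK, .inr ⟨rfl, rfl⟩⟩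

def gadgetVertices : Set (D ⊕ (Fin k × D × D × ℕ)) :=
  ⋃ i, ⋃ xy ∈ {xy : D × D | K i xy.1 xy.2},
    {.inl xy.1, .inl xy.2} ∪ vertex i xy.1 xy.2 '' Set.Iic (i + 2)

variable {K}

lemma gadgetVertices_finite (hK : DA.FiniteStruct K) : (gadgetVertices K).Finite :=
  Set.finite_iUnion fun i =>
    (hK i).biUnion fun _ _ => (Set.toFinite _).union ((Set.finite_Iic _).image _)

lemma mem_gadgetVertices {i : Fin k} {x y : D} (h : K i x y) :
    Sum.inl x ∈ gadgetVertices K ∧ Sum.inl y ∈ gadgetVertices K ∧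
      ∀ m ≤ (i : ℕ) + 2, vertex i x y m ∈ gadgetVertices K := by
  simp only [gadgetVertices, Set.mem_iUnion]
  exact ⟨⟨i, (x, y), h, by simp⟩, ⟨i, (x, y), h, by simp⟩,
    fun m hm => ⟨i, (x, y), h, .inr ⟨m, hm, rfl⟩⟩⟩

lemma gadget_finite (hK : DA.FiniteStruct K) : DA.FiniteStruct (gadget K) := by
  intro r
  refine ((gadgetVertices_finite hK).prod (gadgetVertices_finite hK)).subset ?_
  rintro ⟨p, q⟩ hpq
  cases r with
  | b =>
    obtain ⟨i, x, y, h, ⟨rfl, rfl⟩ | ⟨rfl, rfl⟩⟩ := hpq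
    · exact ⟨(mem_gadgetVertices h).1, (mem_gadgetVertices h).2.2 0 (by omega)⟩
    · exact ⟨(mem_gadgetVertices h).2.2 _ le_rfl, (mem_gadgetVertices h).2.1⟩
  | c =>
    obtain ⟨i, x, y, m, m', h, rfl, rfl, hstep⟩ := hpq
    exact ⟨(mem_gadgetVertices h).2.2 m (by omega), (mem_gadgetVertices h).2.2 m' (by omega)⟩

end BC

/-- For every finite structure K over Γ = {a₁, …, a_k} there is a finite structure J
over {b,c} (on a domain extending that of K along an injection ι, obtained by replacing
each aᵢ-edge (x,y) by a fresh b(c ∩ c^(i+1))b-gadget) such that e(K) = e\´(J) for every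
DA expression e over Γ: the pairs in e\´(J) are exactly the ι-images of the pairs in e(K). -/
theorem stmt7 (k : ℕ) (D : Type) (K : Fin k → D → D → Prop)
    (hK : DA.FiniteStruct K) :
    ∃ (D' : Type) (ι : D → D') (J : BC → D' → D' → Prop),
      Function.Injective ι ∧ DA.FiniteStruct J ∧
      ∀ (e : DA (Fin k)) (p q : D'),
        DA.eval J (DA.subst (sigmaBC k) e) p q ↔
          ∃ x y : D, p = ι x ∧ q = ι y ∧ DA.eval K e x y := by
  refine ⟨_, Sum.inl, BC.gadget K, Sum.inl_injective, BC.gadget_finite hK, fun e p q => ?_⟩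
  rw [DA.eval_subst_eq_map Sum.inl_injective (BC.eval_sigmaBC_gadget K) e, Relation.map_apply]
  constructor
  · rintro ⟨x, y, h, rfl, rfl⟩
    exact ⟨x, y, rfl, rfl, h⟩
  · rintro ⟨x, y, rfl, rfl, h⟩
    exact ⟨x, y, h, rfl, rfl⟩
end

section
/- For relation names a and b, the DA expression aaa − ((aa − b)a ∪ ba) is unsatisfiable in every structure (finite or infinite): for every structure I over {a, b}, (aaa − ((aa − b)a ∪ ba))(I) = ∅. -/
/-- The vocabulary with two relation names a and b. -/
inductive AB : Type where
  | a : AB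
  | b : AB

open DA in
/-- The expression aaa − ((aa − b)a ∪ ba) over {a, b}. -/
def e12 : DA AB :=
  .diff (.comp (.var .a) (.comp (.var .a) (.var .a)))
    (.union (.comp (.diff (.comp (.var .a) (.var .a)) (.var .b)) (.var .a))
            (.comp (.var .b) (.var .a)))

/-! Read `aaa` as `(aa)a` and split its first `aa`-step from `x` to `w` according to whether
`b` holds between `x` and `w`: this gives `aaa ⊆ (aa − b)a ∪ ba`. -/

namespace DA

variable {Γ D : Type} (I : Γ → D → D → Prop)

theorem eval_comp_assoc (e f g : DA Γ) (x y : D) :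
    eval I ((e.comp f).comp g) x y ↔ eval I (e.comp (f.comp g)) x y :=
  ⟨fun ⟨w, ⟨z, hez, hfw⟩, hgy⟩ => ⟨z, hez, w, hfw, hgy⟩,
    fun ⟨z, hez, w, hfw, hgy⟩ => ⟨w, ⟨z, hez, hfw⟩, hgy⟩⟩

theorem eval_diff_comp_union_of_eval_comp {e g : DA Γ} (f : DA Γ) {x y : D}
    (h : eval I (e.comp g) x y) : eval I (((e.diff f).comp g).union (f.comp g)) x y := by
  obtain ⟨z, hez, hgy⟩ := h
  by_cases hfz : eval I f x z
  · exact Or.inr ⟨z, hfz, hgy⟩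
  · exact Or.inl ⟨z, ⟨hez, hfz⟩, hgy⟩

end DA

/-- The expression aaa − ((aa − b)a ∪ ba) is unsatisfiable in every structure,
finite or infinite. -/
theorem stmt12 (D : Type) (I : AB → D → D → Prop) (x y : D) :
    ¬ DA.eval I e12 x y := by
  rintro ⟨haaa, hnot⟩
  exact hnot (DA.eval_diff_comp_union_of_eval_comp I _ ((DA.eval_comp_assoc I _ _ _ x y).2 haaa))
end

section
/- Let e = a(a ∩ aa) − (aa − a)a over the vocabulary {a}, and let I be any structure over {a} with (x, y) ∈ e(I) for some pair (x, y). Then there exist elements u₁, u₂ such that all five edges x → u₁, u₁ → u₂, u₂ → y, u₁ → y, and x → u₂ belong to a^I. Consequently, either at least two of x, u₁, u₂, y coincide (so the directed graph (adom I, a^I) contains a cycle), or x, u₁, u₂, y are four distinct vertices inducing a subgraph isomorphic to the graph W on {1,2,3,4} with edges {(1,2),(2,3),(3,4),(1,3),(2,4)}. -/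
/-- The expression a(a ∩ aa) − (aa − a)a over the single relation name a. -/
def e14 : DA Unit :=
  .diff (.comp (.var ()) (.inter (.var ()) (.comp (.var ()) (.var ()))))
        (.comp (.diff (.comp (.var ()) (.var ())) (.var ())) (.var ()))

/-- The edge relation of the canonical non-series-parallel graph W, on Fin 4
(vertices 0,1,2,3 standing for 1,2,3,4): edges (1,2),(2,3),(3,4),(1,3),(2,4). -/
def WRel : Fin 4 → Fin 4 → Prop := fun p q =>
  (p = 0 ∧ q = 1) ∨ (p = 1 ∧ q = 2) ∨ (p = 2 ∧ q = 3) ∨ (p = 0 ∧ q = 2) ∨ (p = 1 ∧ q = 3)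

theorem exists_edges_of_eval_e14 {D : Type} {r : D → D → Prop} {x y : D}
    (h : DA.eval (fun _ : Unit => r) e14 x y) :
    ∃ u₁ u₂ : D, r x u₁ ∧ r u₁ u₂ ∧ r u₂ y ∧ r u₁ y ∧ r x u₂ := by
  obtain ⟨⟨u₁, hxu₁, hu₁y, u₂, hu₁u₂, hu₂y⟩, hnot⟩ := h
  -- Without the edge x → u₂ we would have (x, u₂) ∈ aa − a, hence (x, y) ∈ (aa − a)a.
  have hxu₂ : r x u₂ := by
    by_contra hn
    exact hnot ⟨u₂, ⟨⟨u₁, hxu₁, hu₁u₂⟩, hn⟩, hu₂y⟩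
  exact ⟨u₁, u₂, hxu₁, hu₁u₂, hu₂y, hu₁y, hxu₂⟩

theorem WRel.transGen_of_lt {p q : Fin 4} (h : p < q) : Relation.TransGen WRel p q := by
  -- Every pair p < q is an edge of W except (0, 3), reached through 2.
  fin_cases p <;> fin_cases q <;>
    first
    | exact absurd h (by decide)
    | (apply Relation.TransGen.single; simp [WRel]; done)
    | exact .tail (.single (show WRel 0 2 by simp [WRel])) (by simp [WRel])

theorem wRel_map_of_edges {D : Type} {r : D → D → Prop} {x u₁ u₂ y : D}
    (hxu₁ : r x u₁) (hu₁u₂ : r u₁ u₂) (hu₂y : r u₂ y) (hu₁y : r u₁ y) (hxu₂ : r x u₂) :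
    ∀ p q : Fin 4, WRel p q → r (![x, u₁, u₂, y] p) (![x, u₁, u₂, y] q) := by
  rintro p q (⟨rfl, rfl⟩ | ⟨rfl, rfl⟩ | ⟨rfl, rfl⟩ | ⟨rfl, rfl⟩ | ⟨rfl, rfl⟩) <;>
    assumption

theorem injective_of_map_of_acyclic {α D : Type*} [LinearOrder α] {s : α → α → Prop}
    {r : D → D → Prop} {f : α → D} (hs : ∀ p q, p < q → Relation.TransGen s p q)
    (hf : ∀ p q, s p q → r (f p) (f q)) (hr : ∀ v, ¬ Relation.TransGen r v v) :
    Function.Injective f :=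
  .of_lt_imp_ne fun p q hpq hfpq => hr (f q) <| by
    simpa only [Function.onFun, hfpq] using (hs p q hpq).lift f hf

/-- If (x,y) ∈ (a(a ∩ aa) − (aa − a)a)(I) in any structure I over {a}, then there
are u₁, u₂ with the five a-edges x→u₁, u₁→u₂, u₂→y, u₁→y, x→u₂; consequently either
the graph of a^I contains a cycle, or x, u₁, u₂, y are four distinct vertices
carrying a subgraph isomorphic to W. -/
theorem stmt14 (D : Type) (aI : D → D → Prop) (x y : D)
    (h : DA.eval (fun _ : Unit => aI) e14 x y) :
    ∃ u₁ u₂ : D, aI x u₁ ∧ aI u₁ u₂ ∧ aI u₂ y ∧ aI u₁ y ∧ aI x u₂ ∧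
      ((∃ v : D, Relation.TransGen aI v v) ∨
        (Function.Injective ![x, u₁, u₂, y] ∧
          ∀ p q : Fin 4, WRel p q → aI (![x, u₁, u₂, y] p) (![x, u₁, u₂, y] q))) := by
  obtain ⟨u₁, u₂, hxu₁, hu₁u₂, hu₂y, hu₁y, hxu₂⟩ := exists_edges_of_eval_e14 h
  have hW := wRel_map_of_edges hxu₁ hu₁u₂ hu₂y hu₁y hxu₂
  refine ⟨u₁, u₂, hxu₁, hu₁u₂, hu₂y, hu₁y, hxu₂, ?_⟩
  by_cases hcycle : ∃ v, Relation.TransGen aI v v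
  · exact .inl hcycle
  · push Not at hcycle
    exact .inr ⟨injective_of_map_of_acyclic (fun _ _ => WRel.transGen_of_lt) hW hcycle, hW⟩
end

section
/- The expression e = aba − ( a(ba − a) ∪ (a − ab)a ∪ a(b − c)a ∪ a(cc − c)a ∪ a(cb ∩ b)a ) over the vocabulary {a, b, c} is not finitely satisfiable: for every finite structure I over {a, b, c}, e(I) = ∅. -/
/-- The vocabulary with three relation names a, b, c. -/
inductive ABC : Type where
  | a : ABC
  | b : ABC
  | c : ABC

/-- The expression aba − ( a(ba − a) ∪ (a − ab)a ∪ a(b − c)a ∪ a(cc − c)a ∪ a(cb ∩ b)a ). -/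
def eInf : DA ABC :=
  .diff (.comp (.var .a) (.comp (.var .b) (.var .a)))
    (.union (.comp (.var .a) (.diff (.comp (.var .b) (.var .a)) (.var .a)))
     (.union (.comp (.diff (.var .a) (.comp (.var .a) (.var .b))) (.var .a))
      (.union (.comp (.var .a) (.comp (.diff (.var .b) (.var .c)) (.var .a)))
       (.union (.comp (.var .a) (.comp (.diff (.comp (.var .c) (.var .c)) (.var .c)) (.var .a)))
               (.comp (.var .a) (.comp (.inter (.comp (.var .c) (.var .b)) (.var .b)) (.var .a)))))))

/-!
The points `z` with `a x z` and `a z y` form a finite set `S`. The subtracted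
terms force every point of `S` to have a `b`-predecessor in `S`, `b ⊆ c` and `c` to be transitive
on `S`, and `cb ∩ b` to be empty on `S`. Following `b`-predecessors inside the finite set `S`
closes a cycle through some `u`, so `c u u`, and then `u`'s `b`-successor `v` on the cycle
witnesses `cb ∩ b`. -/

open Relation

theorem Finite.exists_transGen_self_of_forall_exists_rel {α : Type*} [Finite α] [Nonempty α]
    {r : α → α → Prop} (h : ∀ z, ∃ u, r u z) : ∃ u, TransGen r u u := by
  by_contra! hirrefl
  have : Std.Irrefl (TransGen r) := ⟨hirrefl⟩
  obtain ⟨m, -, hm⟩ :=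
    (Finite.wellFounded_of_trans_of_irrefl (TransGen r)).has_min Set.univ Set.univ_nonempty
  obtain ⟨u, hum⟩ := h m
  exact hm u trivial (TransGen.single hum)

theorem DA.FiniteStruct.finite_setOf_rel {Γ D : Type} {I : Γ → D → D → Prop}
    (hfin : DA.FiniteStruct I) (a : Γ) (x : D) : {z | I a x z}.Finite :=
  ((hfin a).image Prod.snd).subset fun z hz => ⟨(x, z), hz, rfl⟩

/-- The expression aba − ( a(ba − a) ∪ (a − ab)a ∪ a(b − c)a ∪ a(cc − c)a ∪ a(cb ∩ b)a )
is not finitely satisfiable: it evaluates to the empty relation in every finite structure. -/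
theorem stmt16 (D : Type) (I : ABC → D → D → Prop) (hfin : DA.FiniteStruct I)
    (x y : D) : ¬ DA.eval I eInf x y := by
  intro h
  simp only [eInf, DA.eval] at h
  obtain ⟨⟨z₀, hxz₀, w₀, hz₀w₀, hw₀y⟩, hneg⟩ := h
  push Not at hneg
  obtain ⟨hba, hab, hbc, hcc, hcbb⟩ := hneg
  let S := {z // I .a x z ∧ I .a z y}
  have : Finite S := ((hfin.finite_setOf_rel .a x).subset fun _ hz => hz.1).to_subtype
  have : Nonempty S := ⟨⟨z₀, hxz₀, hba z₀ hxz₀ ⟨w₀, hz₀w₀, hw₀y⟩⟩⟩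
  have hpred : ∀ z : S, ∃ u : S, I .b u z := by
    rintro ⟨z, hxz, hzy⟩
    by_contra! hnone
    refine hab z ⟨hxz, fun u hxu hbuz => ?_⟩ hzy
    exact hnone ⟨u, hxu, hba u hxu ⟨z, hbuz, hzy⟩⟩ hbuz
  have : IsTrans S (fun u z : S => I .c u z) := ⟨fun u v z huv hvz =>
    by_contra fun hnc => hcc u u.2.1 z ⟨⟨v, huv, hvz⟩, hnc⟩ z.2.2⟩
  have hb_le_c : (fun u z : S => I .b u z) ≤ (fun u z : S => I .c u z) := fun u z hbuz =>
    by_contra fun hnc => hbc u u.2.1 z ⟨hbuz, hnc⟩ z.2.2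
  obtain ⟨u, hcycle⟩ := Finite.exists_transGen_self_of_forall_exists_rel hpred
  have hcuu : I .c u u := transGen_minimal hb_le_c u u hcycle
  obtain ⟨v, hbuv, -⟩ := TransGen.head'_iff.mp hcycle
  exact hcbb u u.2.1 v ⟨⟨u, hcuu, hbuv⟩, hbuv⟩ v.2.2
end

section
/- In any structure over {a, b, c} in which the pair (x, y) belongs to the result of e = aba − ( a(ba − a) ∪ (a − ab)a ∪ a(b − c)a ∪ a(cc − c)a ∪ a(cb ∩ b)a ), there exists an infinite sequence of elements u₁, u₂, u₃, … such that: x → uᵢ is an a-edge for every i ≥ 2; uᵢ → y is an a-edge for every i ≥ 1; u_{i+1} → uᵢ is a b-edge for every i ≥ 1; and u_j → u_i is a c-edge for all j > i ≥ 1. -/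
/-- In any structure over {a,b,c} where (x,y) is in the result of
aba − ( a(ba − a) ∪ (a − ab)a ∪ a(b − c)a ∪ a(cc − c)a ∪ a(cb ∩ b)a ), there is an
infinite sequence u₁, u₂, … (here u i for i ≥ 1) with: x → uᵢ an a-edge for i ≥ 2,
uᵢ → y an a-edge for i ≥ 1, u_{i+1} → uᵢ a b-edge for i ≥ 1, and u_j → u_i a c-edge
for all j > i ≥ 1. -/
theorem stmt17 (D : Type) (I : ABC → D → D → Prop) (x y : D)
    (h : DA.eval I eInf x y) :
    ∃ u : ℕ → D,
      (∀ i, 2 ≤ i → I .a x (u i)) ∧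
      (∀ i, 1 ≤ i → I .a (u i) y) ∧
      (∀ i, 1 ≤ i → I .b (u (i + 1)) (u i)) ∧
      (∀ i j, 1 ≤ i → i < j → I .c (u j) (u i)) := by
  simp only [eInf, DA.eval] at h
  obtain ⟨⟨z0, haxz0, w0, hbz0w0, haw0y⟩, hneg⟩ := h
  push_neg at hneg
  obtain ⟨h1, h2, h3, h4, -⟩ := hneg
  have hP0 : I ABC.a x z0 ∧ I ABC.a z0 y := ⟨haxz0, h1 z0 haxz0 ⟨w0, hbz0w0, haw0y⟩⟩
  have key : ∀ z, I ABC.a x z ∧ I ABC.a z y →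
      ∃ w, (I ABC.a x w ∧ I ABC.a w y) ∧ I ABC.b w z := by
    intro z hz
    by_contra hcon
    push_neg at hcon
    apply h2 z ?_ hz.2
    refine ⟨hz.1, fun w haw hb => ?_⟩
    exact hcon w ⟨haw, h1 w haw ⟨z, hb, hz.2⟩⟩ hb
  let f : ℕ → {z : D // I ABC.a x z ∧ I ABC.a z y} := fun n =>
    Nat.rec ⟨z0, hP0⟩ (fun _ p => ⟨(key p.1 p.2).choose, (key p.1 p.2).choose_spec.1⟩) n
  have hb : ∀ n, I ABC.b (f (n+1)).1 (f n).1 := fun n => (key (f n).1 (f n).2).choose_spec.2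
  have hcstep : ∀ n, I ABC.c (f (n+1)).1 (f n).1 := by
    intro n
    by_contra hcn
    exact h3 _ (f (n+1)).2.1 _ ⟨hb n, hcn⟩ (f n).2.2
  have hctrans : ∀ i j, i < j → I ABC.c (f j).1 (f i).1 := by
    intro i j hij
    induction j, hij using Nat.le_induction with
    | base => exact hcstep i
    | succ j hij ih =>
      by_contra hcn
      exact h4 _ (f (j+1)).2.1 _ ⟨⟨(f j).1, hcstep j, ih⟩, hcn⟩ (f i).2.2
  exact ⟨fun n => (f n).1, fun i _ => (f i).2.1, fun i _ => (f i).2.2,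
    fun i _ => hb i, fun i j _ hij => hctrans i j hij⟩
end
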